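/- Let d ≥ 3 be an integer and b > 0. For i = 1, 2 let u_i, h_i ∈ C²([0,∞)) solve the SNH shooting system in dimension d on (0,∞) with u_i(0) = b, h_i(0) = c_i, u_i′(0) = h_i′(0) = 0. Assume u_i(r) > 0 for all r ≥ 0, u_i(r) → 0 as r → ∞, and ∫₀^∞ u_i(r)² r^{d−1} dr < ∞ for i = 1, 2. Then c₁ = c₂, u₁ = u₂, and h₁ = h₂. In other words, for fixed central value b > 0 the positive decaying (ground state) solution of the shooting system is unique. -/

import Mathlib

open Set MeasureTheory Filter

/-- One-sided derivative on `[0,∞)`. -/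
noncomputable def dI (u : ℝ → ℝ) : ℝ → ℝ := derivWithin u (Set.Ici 0)

/-- `u` is of class `C²` on `[0,∞)` (with one-sided derivatives at `0`). -/
def C2Ici (u : ℝ → ℝ) : Prop :=
  (∀ r ∈ Set.Ici (0:ℝ), DifferentiableWithinAt ℝ u (Set.Ici 0) r) ∧
  (∀ r ∈ Set.Ici (0:ℝ), DifferentiableWithinAt ℝ (dI u) (Set.Ici 0) r) ∧
  ContinuousOn (dI (dI u)) (Set.Ici 0)

open intervalIntegral

lemma C2Ici.cont {u : ℝ → ℝ} (hu : C2Ici u) : ContinuousOn u (Set.Ici 0) :=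
  fun r hr => (hu.1 r hr).continuousWithinAt

lemma C2Ici.cont' {u : ℝ → ℝ} (hu : C2Ici u) : ContinuousOn (dI u) (Set.Ici 0) :=
  fun r hr => (hu.2.1 r hr).continuousWithinAt

lemma C2Ici.hd1 {u : ℝ → ℝ} (hu : C2Ici u) {r : ℝ} (hr : 0 < r) :
    HasDerivAt u (dI u r) r :=
  (hu.1 r hr.le).hasDerivWithinAt.hasDerivAt (Ici_mem_nhds hr)

lemma C2Ici.hd2 {u : ℝ → ℝ} (hu : C2Ici u) {r : ℝ} (hr : 0 < r) :
    HasDerivAt (dI u) (dI (dI u) r) r :=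
  (hu.2.1 r hr.le).hasDerivWithinAt.hasDerivAt (Ici_mem_nhds hr)

/-- FTC convenience. -/
lemma ftc_my (f f' : ℝ → ℝ) (a b : ℝ) (hab : a ≤ b)
    (hc : ContinuousOn f (Icc a b))
    (hd : ∀ x ∈ Ioo a b, HasDerivAt f (f' x) x)
    (hi : ContinuousOn f' (Icc a b)) :
    ∫ x in a..b, f' x = f b - f a :=
  integral_eq_sub_of_hasDeriv_right_of_le hab hc
    (fun x hx => (hd x hx).hasDerivWithinAt)
    (hi.intervalIntegrable_of_Icc hab)

lemma keyA (k : ℕ) (u₁ u₂ h₁ h₂ : ℝ → ℝ)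
    (hu₁ : C2Ici u₁) (hh₁ : C2Ici h₁) (hu₂ : C2Ici u₂) (hh₂ : C2Ici h₂)
    (hequ₁ : ∀ r : ℝ, 0 < r →
      dI (dI u₁) r + (((k:ℝ)+3) - 1) / r * dI u₁ r - r^2 * u₁ r + h₁ r * u₁ r = 0)
    (hequ₂ : ∀ r : ℝ, 0 < r →
      dI (dI u₂) r + (((k:ℝ)+3) - 1) / r * dI u₂ r - r^2 * u₂ r + h₂ r * u₂ r = 0)
    (heqh₁ : ∀ r : ℝ, 0 < r →
      dI (dI h₁) r + (((k:ℝ)+3) - 1) / r * dI h₁ r + (u₁ r)^2 = 0)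
    (heqh₂ : ∀ r : ℝ, 0 < r →
      dI (dI h₂) r + (((k:ℝ)+3) - 1) / r * dI h₂ r + (u₂ r)^2 = 0)
    (hb : u₁ 0 = u₂ 0)
    (hpos₁ : ∀ r : ℝ, 0 ≤ r → 0 < u₁ r) (hpos₂ : ∀ r : ℝ, 0 ≤ r → 0 < u₂ r)
    (hint₁ : IntegrableOn (fun r : ℝ => (u₁ r)^2 * r^(k+2)) (Ioi 0))
    (hc : h₁ 0 < h₂ 0) : False := by
  classical
  set δ : ℝ → ℝ := fun r => h₂ r - h₁ r with hδdef
  set W : ℝ → ℝ := fun r => r^(k+2) * (dI u₁ r * u₂ r - u₁ r * dI u₂ r) with hWdef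
  set g : ℝ → ℝ := fun r => r^(k+2) * (u₁ r * u₂ r * δ r) with hgdef
  set Z : ℝ → ℝ := fun r => r^(k+2) * (dI h₂ r - dI h₁ r) with hZdef
  set Zg : ℝ → ℝ := fun r => r^(k+2) * ((u₁ r)^2 - (u₂ r)^2) with hZgdef
  have hδc : ContinuousOn δ (Ici 0) := hh₂.cont.sub hh₁.cont
  have hpowc : ContinuousOn (fun r : ℝ => r^(k+2)) (Ici 0) :=
    (continuous_pow (k+2)).continuousOn
  have hWc : ContinuousOn W (Ici 0) :=
    hpowc.mul (((hu₁.cont').mul hu₂.cont).sub ((hu₁.cont).mul hu₂.cont'))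
  have hgc : ContinuousOn g (Ici 0) :=
    hpowc.mul (((hu₁.cont).mul hu₂.cont).mul hδc)
  have hZc : ContinuousOn Z (Ici 0) :=
    hpowc.mul ((hh₂.cont').sub hh₁.cont')
  have hZgc : ContinuousOn Zg (Ici 0) :=
    hpowc.mul (((hu₁.cont).pow 2).sub ((hu₂.cont).pow 2))
  -- derivative of W
  have hWd : ∀ r : ℝ, 0 < r → HasDerivAt W (g r) r := by
    intro r hr
    have h1 : HasDerivAt (fun r => dI u₁ r * u₂ r - u₁ r * dI u₂ r)
        (dI (dI u₁) r * u₂ r + dI u₁ r * dI u₂ r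
          - (dI u₁ r * dI u₂ r + u₁ r * dI (dI u₂) r)) r :=
      ((hu₁.hd2 hr).mul (hu₂.hd1 hr)).sub ((hu₁.hd1 hr).mul (hu₂.hd2 hr))
    have h2 : HasDerivAt (fun r : ℝ => r^(k+2)) (((k:ℝ)+2) * r^(k+1)) r := by
      simpa using hasDerivAt_pow (k+2) r
    have := h2.mul h1
    convert this using 1
    · rfl
    · rfl
    · rfl
    have e1 : dI (dI u₁) r = -((((k:ℝ)+3) - 1) / r * dI u₁ r) + r^2 * u₁ r - h₁ r * u₁ r := by
      have := hequ₁ r hr; linarith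
    have e2 : dI (dI u₂) r = -((((k:ℝ)+3) - 1) / r * dI u₂ r) + r^2 * u₂ r - h₂ r * u₂ r := by
      have := hequ₂ r hr; linarith
    rw [hgdef]
    simp only [e1, e2]
    have hrne : r ≠ 0 := ne_of_gt hr
    have hpow : r^(k+2) = r^(k+1) * r := by ring
    field_simp
    ring
  -- derivative of Z
  have hZd : ∀ r : ℝ, 0 < r → HasDerivAt Z (Zg r) r := by
    intro r hr
    have h1 : HasDerivAt (fun r => dI h₂ r - dI h₁ r)
        (dI (dI h₂) r - dI (dI h₁) r) r := (hh₂.hd2 hr).sub (hh₁.hd2 hr)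
    have h2 : HasDerivAt (fun r : ℝ => r^(k+2)) (((k:ℝ)+2) * r^(k+1)) r := by
      simpa using hasDerivAt_pow (k+2) r
    have := h2.mul h1
    convert this using 1
    · rfl
    · rfl
    · rfl
    have e1 : dI (dI h₁) r = -((((k:ℝ)+3) - 1) / r * dI h₁ r) - (u₁ r)^2 := by
      have := heqh₁ r hr; linarith
    have e2 : dI (dI h₂) r = -((((k:ℝ)+3) - 1) / r * dI h₂ r) - (u₂ r)^2 := by
      have := heqh₂ r hr; linarith
    rw [hZgdef]
    simp only [e1, e2]
    have hrne : r ≠ 0 := ne_of_gt hr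
    field_simp
    ring
  -- integral representations
  have hWint : ∀ r : ℝ, 0 ≤ r → W r = ∫ x in (0:ℝ)..r, g x := by
    intro r hr
    have hIcc : Icc (0:ℝ) r ⊆ Ici 0 := Icc_subset_Ici_self
    have := ftc_my W g 0 r hr (hWc.mono hIcc)
      (fun x hx => hWd x hx.1) (hgc.mono hIcc)
    have hW0 : W 0 = 0 := by simp [hWdef]
    rw [this, hW0, sub_zero]
  have hZint : ∀ r : ℝ, 0 ≤ r → Z r = ∫ x in (0:ℝ)..r, Zg x := by
    intro r hr
    have hIcc : Icc (0:ℝ) r ⊆ Ici 0 := Icc_subset_Ici_self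
    have := ftc_my Z Zg 0 r hr (hZc.mono hIcc)
      (fun x hx => hZd x hx.1) (hZgc.mono hIcc)
    have hZ0 : Z 0 = 0 := by simp [hZdef]
    rw [this, hZ0, sub_zero]
  -- positivity of delta
  have hδpos : ∀ r : ℝ, 0 ≤ r → 0 < δ r := by
    by_contra hcon
    push_neg at hcon
    obtain ⟨r₁, hr₁0, hr₁⟩ := hcon
    set S : Set ℝ := Ici 0 ∩ δ ⁻¹' (Iic 0) with hSdef
    have hSne : S.Nonempty := ⟨r₁, hr₁0, hr₁⟩
    have hSbdd : BddBelow S := ⟨0, fun x hx => hx.1⟩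
    have hSclosed : IsClosed S :=
      hδc.preimage_isClosed_of_isClosed isClosed_Ici isClosed_Iic
    set r₀ := sInf S with hr₀def
    have hr₀S : r₀ ∈ S := hSclosed.csInf_mem hSne hSbdd
    have hr₀0 : 0 ≤ r₀ := hr₀S.1
    have hδr₀ : δ r₀ ≤ 0 := hr₀S.2
    have hδ0 : 0 < δ 0 := by simpa [hδdef] using hc
    have hr₀pos : 0 < r₀ := by
      rcases hr₀0.lt_or_eq with h | h
      · exact h
      · exfalso
        have : δ 0 ≤ 0 := by simpa [← h] using hδr₀
        linarith
    have hbefore : ∀ s : ℝ, 0 ≤ s → s < r₀ → 0 < δ s := by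
      intro s hs0 hsr
      by_contra hnot
      push_neg at hnot
      exact absurd (csInf_le hSbdd ⟨hs0, hnot⟩) (not_le.mpr hsr)
    have hWpos : ∀ r : ℝ, 0 < r → r ≤ r₀ → 0 < W r := by
      intro r hr hrr₀
      rw [hWint r hr.le]
      apply intervalIntegral_pos_of_pos_on
      · exact (hgc.mono (Icc_subset_Ici_self)).intervalIntegrable_of_Icc hr.le
      · intro x hx
        have hx0 : 0 < x := hx.1
        have hδx : 0 < δ x := hbefore x hx0.le (lt_of_lt_of_le hx.2 hrr₀)
        have := hpos₁ x hx0.le; have := hpos₂ x hx0.le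
        have : 0 < x^(k+2) := pow_pos hx0 _
        rw [hgdef]; positivity
      · exact hr
    have huge : ∀ r : ℝ, 0 < r → r ≤ r₀ → u₂ r < u₁ r := by
      intro r hr hrr₀
      set q : ℝ → ℝ := fun x => u₁ x / u₂ x with hqdef
      have hqmono : StrictMonoOn q (Icc 0 r₀) := by
        apply strictMonoOn_of_deriv_pos (convex_Icc 0 r₀)
        · apply ContinuousOn.div ((hu₁.cont).mono Icc_subset_Ici_self)
            ((hu₂.cont).mono Icc_subset_Ici_self)
          intro x hx; exact ne_of_gt (hpos₂ x hx.1)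
        · intro x hx
          rw [interior_Icc] at hx
          have hx0 : 0 < x := hx.1
          have hu₂x : u₂ x ≠ 0 := ne_of_gt (hpos₂ x hx0.le)
          have hdq : HasDerivAt q
              ((dI u₁ x * u₂ x - u₁ x * dI u₂ x) / (u₂ x)^2) x :=
            (hu₁.hd1 hx0).div (hu₂.hd1 hx0) hu₂x
          rw [hdq.deriv]
          have hnum : 0 < dI u₁ x * u₂ x - u₁ x * dI u₂ x := by
            have h1 := hWpos x hx0 hx.2.le
            have h2 : 0 < x^(k+2) := pow_pos hx0 _
            have h1' : 0 < x ^ (k + 2) * (dI u₁ x * u₂ x - u₁ x * dI u₂ x) := h1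
            nlinarith
          have hden : 0 < (u₂ x)^2 := by positivity
          positivity
      have hq0 : q 0 = 1 := by
        rw [hqdef]; simp only []
        rw [hb, div_self (ne_of_gt (hpos₂ 0 le_rfl))]
      have := hqmono (left_mem_Icc.mpr hr₀0) ⟨hr.le, hrr₀⟩ hr
      rw [hq0] at this
      exact (one_lt_div (hpos₂ r hr.le)).mp this
    have hZpos : ∀ r : ℝ, 0 < r → r ≤ r₀ → 0 < Z r := by
      intro r hr hrr₀
      rw [hZint r hr.le]
      apply intervalIntegral_pos_of_pos_on
      · exact (hZgc.mono (Icc_subset_Ici_self)).intervalIntegrable_of_Icc hr.le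
      · intro x hx
        have hx0 : 0 < x := hx.1
        have h12 := huge x hx0 (lt_of_lt_of_le hx.2 hrr₀).le
        have h2 := hpos₂ x hx0.le
        have hxp : 0 < x^(k+2) := pow_pos hx0 _
        rw [hZgdef]
        have : 0 < (u₁ x)^2 - (u₂ x)^2 := by nlinarith
        positivity
      · exact hr
    have hδmono : StrictMonoOn δ (Icc 0 r₀) := by
      apply strictMonoOn_of_deriv_pos (convex_Icc 0 r₀)
      · exact hδc.mono Icc_subset_Ici_self
      · intro x hx
        rw [interior_Icc] at hx
        have hx0 : 0 < x := hx.1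
        have hdδ : HasDerivAt δ (dI h₂ x - dI h₁ x) x :=
          (hh₂.hd1 hx0).sub (hh₁.hd1 hx0)
        rw [hdδ.deriv]
        have h1 := hZpos x hx0 hx.2.le
        have h2 : 0 < x^(k+2) := pow_pos hx0 _
        have h1' : 0 < x ^ (k + 2) * (dI h₂ x - dI h₁ x) := h1
        nlinarith
    have := hδmono (left_mem_Icc.mpr hr₀0) (right_mem_Icc.mpr hr₀0) hr₀pos
    linarith
  -- W positive everywhere on (0, ∞)
  have hWpos : ∀ r : ℝ, 0 < r → 0 < W r := by
    intro r hr
    rw [hWint r hr.le]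
    apply intervalIntegral_pos_of_pos_on
    · exact (hgc.mono Icc_subset_Ici_self).intervalIntegrable_of_Icc hr.le
    · intro x hx
      have hx0 : 0 < x := hx.1
      have h1 := hpos₁ x hx0.le
      have h2 := hpos₂ x hx0.le
      have h3 := hδpos x hx0.le
      have h4 : 0 < x^(k+2) := pow_pos hx0 _
      rw [hgdef]; positivity
    · exact hr
  set m := W 1 with hmdef
  have hm : 0 < m := hWpos 1 one_pos
  have hWmono : ∀ r : ℝ, 1 ≤ r → m ≤ W r := by
    intro r hr
    have hIcc : Icc (1:ℝ) r ⊆ Ici 0 := fun x hx => le_trans zero_le_one hx.1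
    have hftc := ftc_my W g 1 r hr (hWc.mono hIcc)
      (fun x hx => hWd x (lt_of_lt_of_le one_pos hx.1.le)) (hgc.mono hIcc)
    have hnn : 0 ≤ ∫ x in (1:ℝ)..r, g x := by
      apply intervalIntegral.integral_nonneg hr
      intro x hx
      have hx0 : 0 < x := lt_of_lt_of_le one_pos hx.1
      have h1 := hpos₁ x hx0.le
      have h2 := hpos₂ x hx0.le
      have h3 := hδpos x hx0.le
      have h4 : 0 < x^(k+2) := pow_pos hx0 _
      rw [hgdef]; positivity
    linarith
  -- the decreasing quotient
  set σ : ℝ → ℝ := fun x => u₂ x / u₁ x with hσdef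
  set A : ℝ → ℝ := fun x => x^(k+2) * (u₁ x)^2 with hAdef
  have hApos : ∀ x : ℝ, 0 < x → 0 < A x := by
    intro x hx
    have := hpos₁ x hx.le
    rw [hAdef]; positivity
  have hAc : ContinuousOn A (Ici 0) := hpowc.mul ((hu₁.cont).pow 2)
  set I₁ := ∫ r in Ioi (0:ℝ), (u₁ r)^2 * r^(k+2) with hI₁def
  have hI₁nn : 0 ≤ I₁ := by
    apply setIntegral_nonneg measurableSet_Ioi
    intro x hx
    have hx0 : (0:ℝ) < x := hx
    positivity
  have hσ1pos : 0 < σ 1 := div_pos (hpos₂ 1 zero_le_one) (hpos₁ 1 zero_le_one)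
  set R := 1 + (I₁ + σ 1 / m) / 2 + 1 with hRdef
  have hdivnn : 0 ≤ σ 1 / m := le_of_lt (div_pos hσ1pos hm)
  have hR1 : 1 ≤ R := by rw [hRdef]; linarith
  have hR0 : (0:ℝ) ≤ R := le_trans zero_le_one hR1
  have hIccR : Icc (1:ℝ) R ⊆ Ici 0 := fun x hx => le_trans zero_le_one hx.1
  have hAne : ∀ x ∈ Icc (1:ℝ) R, A x ≠ 0 :=
    fun x hx => ne_of_gt (hApos x (lt_of_lt_of_le one_pos hx.1))
  have hainv_c : ContinuousOn (fun x => 1 / A x) (Icc 1 R) := by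
    apply ContinuousOn.div continuousOn_const (hAc.mono hIccR) hAne
  have hWa_c : ContinuousOn (fun x => W x / A x) (Icc 1 R) :=
    (hWc.mono hIccR).div (hAc.mono hIccR) hAne
  -- FTC for σ
  have hσftc : σ 1 - σ R = ∫ x in (1:ℝ)..R, W x / A x := by
    have hd : ∀ x ∈ uIcc (1:ℝ) R, HasDerivAt σ (-(W x / A x)) x := by
      intro x hx
      rw [uIcc_of_le hR1] at hx
      have hx0 : 0 < x := lt_of_lt_of_le one_pos hx.1
      have hu₁x : u₁ x ≠ 0 := ne_of_gt (hpos₁ x hx0.le)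
      have hdq : HasDerivAt σ
          ((dI u₂ x * u₁ x - u₂ x * dI u₁ x) / (u₁ x)^2) x :=
        (hu₂.hd1 hx0).div (hu₁.hd1 hx0) hu₁x
      convert hdq using 1
      rw [hWdef, hAdef]
      have hxne : x ≠ 0 := ne_of_gt hx0
      have hxp : (0:ℝ) < x ^ (k+2) := pow_pos hx0 _
      field_simp
      ring
    have hint : IntervalIntegrable (fun x => -(W x / A x)) volume 1 R :=
      (hWa_c.neg).intervalIntegrable_of_Icc hR1
    have := intervalIntegral.integral_eq_sub_of_hasDerivAt hd hint
    rw [intervalIntegral.integral_neg] at this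
    linarith
  have hWa_int : IntervalIntegrable (fun x => W x / A x) volume 1 R :=
    hWa_c.intervalIntegrable_of_Icc hR1
  have hainv_int : IntervalIntegrable (fun x => 1 / A x) volume 1 R :=
    hainv_c.intervalIntegrable_of_Icc hR1
  have hma_int : IntervalIntegrable (fun x => m * (1 / A x)) volume 1 R :=
    (hainv_c.const_smul m).intervalIntegrable_of_Icc hR1
  set J := ∫ x in (1:ℝ)..R, 1 / A x with hJdef
  have hstep1 : m * J ≤ ∫ x in (1:ℝ)..R, W x / A x := by
    have : ∫ x in (1:ℝ)..R, m * (1 / A x) ≤ ∫ x in (1:ℝ)..R, W x / A x := by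
      apply intervalIntegral.integral_mono_on hR1 hma_int hWa_int
      intro x hx
      have hx0 : 0 < x := lt_of_lt_of_le one_pos hx.1
      have hA := hApos x hx0
      have hW := hWmono x hx.1
      rw [mul_one_div]
      exact div_le_div_of_nonneg_right hW hA.le
    calc m * J = ∫ x in (1:ℝ)..R, m * (1 / A x) := by
          rw [hJdef, ← intervalIntegral.integral_const_mul]
      _ ≤ _ := this
  -- comparison of ∫ A with I₁
  have hIR : ∫ x in (1:ℝ)..R, A x ≤ I₁ := by
    rw [intervalIntegral.integral_of_le hR1]
    have heq : ∫ x in Ioc (1:ℝ) R, A x = ∫ x in Ioc (1:ℝ) R, (u₁ x)^2 * x^(k+2) := by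
      apply setIntegral_congr_fun measurableSet_Ioc
      intro x hx
      rw [hAdef]; ring
    rw [heq, hI₁def]
    apply setIntegral_mono_set hint₁
    · rw [EventuallyLE, ae_restrict_iff' measurableSet_Ioi]
      filter_upwards with x hx
      have hx0 : (0:ℝ) < x := hx
      positivity
    · exact HasSubset.Subset.eventuallyLE (fun x hx => lt_trans one_pos hx.1)
  have hA_int : IntervalIntegrable A volume 1 R :=
    (hAc.mono hIccR).intervalIntegrable_of_Icc hR1
  -- AM-GM estimate
  have hmain : 2*(R-1) ≤ I₁ + J := by
    have h2 : ∫ x in (1:ℝ)..R, (2:ℝ) ≤ ∫ x in (1:ℝ)..R, (A x + 1 / A x) := by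
      apply intervalIntegral.integral_mono_on hR1 intervalIntegrable_const
        (hA_int.add hainv_int)
      intro x hx
      have hx0 : 0 < x := lt_of_lt_of_le one_pos hx.1
      have hA := hApos x hx0
      have hAinv : A x * (1 / A x) = 1 := mul_one_div_cancel (ne_of_gt hA)
      nlinarith [sq_nonneg (A x - 1)]
    rw [intervalIntegral.integral_const, intervalIntegral.integral_add hA_int hainv_int] at h2
    have : (R - 1) • (2:ℝ) = 2*(R-1) := by rw [smul_eq_mul]; ring
    rw [this] at h2
    rw [hJdef]
    linarith
  -- conclusion
  have hσR : 0 < σ R := div_pos (hpos₂ R hR0) (hpos₁ R hR0)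
  have hJlb : σ 1 / m + 2 ≤ J := by
    have hRR : 2*(R-1) = I₁ + (σ 1 / m + 2) := by rw [hRdef]; ring
    rw [hRR] at hmain
    linarith
  have hmJ : σ 1 + 2*m ≤ m * J := by
    have h1 : m * (σ 1 / m + 2) ≤ m * J := mul_le_mul_of_nonneg_left hJlb hm.le
    have h2 : m * (σ 1 / m + 2) = σ 1 + 2*m := by
      field_simp
    linarith
  linarith [hσftc, hstep1, hσR, hmJ]

lemma keyB (k : ℕ) (u₁ u₂ h₁ h₂ : ℝ → ℝ)
    (hu₁ : C2Ici u₁) (hh₁ : C2Ici h₁) (hu₂ : C2Ici u₂) (hh₂ : C2Ici h₂)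
    (hequ₁ : ∀ r : ℝ, 0 < r →
      dI (dI u₁) r + (((k:ℝ)+3) - 1) / r * dI u₁ r - r^2 * u₁ r + h₁ r * u₁ r = 0)
    (hequ₂ : ∀ r : ℝ, 0 < r →
      dI (dI u₂) r + (((k:ℝ)+3) - 1) / r * dI u₂ r - r^2 * u₂ r + h₂ r * u₂ r = 0)
    (heqh₁ : ∀ r : ℝ, 0 < r →
      dI (dI h₁) r + (((k:ℝ)+3) - 1) / r * dI h₁ r + (u₁ r)^2 = 0)
    (heqh₂ : ∀ r : ℝ, 0 < r →
      dI (dI h₂) r + (((k:ℝ)+3) - 1) / r * dI h₂ r + (u₂ r)^2 = 0)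
    (hb : u₁ 0 = u₂ 0) (hc : h₁ 0 = h₂ 0)
    (hu₁'0 : dI u₁ 0 = 0) (hu₂'0 : dI u₂ 0 = 0)
    (hh₁'0 : dI h₁ 0 = 0) (hh₂'0 : dI h₂ 0 = 0) :
    ∀ r : ℝ, 0 ≤ r → u₁ r = u₂ r ∧ h₁ r = h₂ r := by
  classical
  set v : ℝ → ℝ := fun x => u₂ x - u₁ x with hvdef
  set dv : ℝ → ℝ := fun x => dI u₂ x - dI u₁ x with hdvdef
  set dl : ℝ → ℝ := fun x => h₂ x - h₁ x with hdldef
  set ddl : ℝ → ℝ := fun x => dI h₂ x - dI h₁ x with hddldef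
  set P : ℝ → ℝ := fun x => x^(k+2) * dv x with hPdef
  set Pg : ℝ → ℝ := fun x =>
    x^(k+2) * (x^2 * v x - h₂ x * v x - dl x * u₁ x) with hPgdef
  set Q : ℝ → ℝ := fun x => x^(k+2) * ddl x with hQdef
  set Qg : ℝ → ℝ := fun x => -(x^(k+2) * ((u₁ x + u₂ x) * v x)) with hQgdef
  have hpowc : ContinuousOn (fun r : ℝ => r^(k+2)) (Ici 0) :=
    (continuous_pow (k+2)).continuousOn
  have hvc : ContinuousOn v (Ici 0) := hu₂.cont.sub hu₁.cont
  have hdvc : ContinuousOn dv (Ici 0) := hu₂.cont'.sub hu₁.cont'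
  have hdlc : ContinuousOn dl (Ici 0) := hh₂.cont.sub hh₁.cont
  have hddlc : ContinuousOn ddl (Ici 0) := hh₂.cont'.sub hh₁.cont'
  have hPc : ContinuousOn P (Ici 0) := hpowc.mul hdvc
  have hQc : ContinuousOn Q (Ici 0) := hpowc.mul hddlc
  have hPgc : ContinuousOn Pg (Ici 0) := by
    apply hpowc.mul
    exact (((continuous_id.pow 2).continuousOn.mul hvc).sub
      (hh₂.cont.mul hvc)).sub (hdlc.mul hu₁.cont)
  have hQgc : ContinuousOn Qg (Ici 0) :=
    (hpowc.mul ((hu₁.cont.add hu₂.cont).mul hvc)).neg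
  have hPd : ∀ x : ℝ, 0 < x → HasDerivAt P (Pg x) x := by
    intro r hr
    have h1 : HasDerivAt dv (dI (dI u₂) r - dI (dI u₁) r) r :=
      (hu₂.hd2 hr).sub (hu₁.hd2 hr)
    have h2 : HasDerivAt (fun r : ℝ => r^(k+2)) (((k:ℝ)+2) * r^(k+1)) r := by
      simpa using hasDerivAt_pow (k+2) r
    have := h2.mul h1
    convert this using 1
    · rfl
    · rfl
    · rfl
    have e1 : dI (dI u₁) r = -((((k:ℝ)+3) - 1) / r * dI u₁ r) + r^2 * u₁ r - h₁ r * u₁ r := by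
      have := hequ₁ r hr; linarith
    have e2 : dI (dI u₂) r = -((((k:ℝ)+3) - 1) / r * dI u₂ r) + r^2 * u₂ r - h₂ r * u₂ r := by
      have := hequ₂ r hr; linarith
    rw [hPgdef]
    simp only [e1, e2, hvdef, hdldef, hdvdef]
    have hrne : r ≠ 0 := ne_of_gt hr
    field_simp
    ring
  have hQd : ∀ x : ℝ, 0 < x → HasDerivAt Q (Qg x) x := by
    intro r hr
    have h1 : HasDerivAt ddl (dI (dI h₂) r - dI (dI h₁) r) r :=
      (hh₂.hd2 hr).sub (hh₁.hd2 hr)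
    have h2 : HasDerivAt (fun r : ℝ => r^(k+2)) (((k:ℝ)+2) * r^(k+1)) r := by
      simpa using hasDerivAt_pow (k+2) r
    have := h2.mul h1
    convert this using 1
    · rfl
    · rfl
    · rfl
    have e1 : dI (dI h₁) r = -((((k:ℝ)+3) - 1) / r * dI h₁ r) - (u₁ r)^2 := by
      have := heqh₁ r hr; linarith
    have e2 : dI (dI h₂) r = -((((k:ℝ)+3) - 1) / r * dI h₂ r) - (u₂ r)^2 := by
      have := heqh₂ r hr; linarith
    rw [hQgdef]
    simp only [e1, e2, hvdef, hddldef]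
    have hrne : r ≠ 0 := ne_of_gt hr
    field_simp
    ring
  have hPint : ∀ r : ℝ, 0 ≤ r → P r = ∫ x in (0:ℝ)..r, Pg x := by
    intro r hr
    have hIcc : Icc (0:ℝ) r ⊆ Ici 0 := Icc_subset_Ici_self
    have := ftc_my P Pg 0 r hr (hPc.mono hIcc)
      (fun x hx => hPd x hx.1) (hPgc.mono hIcc)
    have hP0 : P 0 = 0 := by simp [hPdef]
    rw [this, hP0, sub_zero]
  have hQint : ∀ r : ℝ, 0 ≤ r → Q r = ∫ x in (0:ℝ)..r, Qg x := by
    intro r hr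
    have hIcc : Icc (0:ℝ) r ⊆ Ici 0 := Icc_subset_Ici_self
    have := ftc_my Q Qg 0 r hr (hQc.mono hIcc)
      (fun x hx => hQd x hx.1) (hQgc.mono hIcc)
    have hQ0 : Q 0 = 0 := by simp [hQdef]
    rw [this, hQ0, sub_zero]
  have hvint : ∀ r : ℝ, 0 ≤ r → v r = ∫ x in (0:ℝ)..r, dv x := by
    intro r hr
    have hIcc : Icc (0:ℝ) r ⊆ Ici 0 := Icc_subset_Ici_self
    have := ftc_my v dv 0 r hr (hvc.mono hIcc)
      (fun x hx => (hu₂.hd1 hx.1).sub (hu₁.hd1 hx.1)) (hdvc.mono hIcc)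
    have hv0 : v 0 = 0 := by rw [hvdef]; simp [hb]
    rw [this, hv0, sub_zero]
  have hdlint : ∀ r : ℝ, 0 ≤ r → dl r = ∫ x in (0:ℝ)..r, ddl x := by
    intro r hr
    have hIcc : Icc (0:ℝ) r ⊆ Ici 0 := Icc_subset_Ici_self
    have := ftc_my dl ddl 0 r hr (hdlc.mono hIcc)
      (fun x hx => (hh₂.hd1 hx.1).sub (hh₁.hd1 hx.1)) (hddlc.mono hIcc)
    have hdl0 : dl 0 = 0 := by rw [hdldef]; simp [hc]
    rw [this, hdl0, sub_zero]
  -- extended modulus function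
  set φ : ℝ → ℝ := fun x => |v (max x 0)| + |dl (max x 0)| with hφdef
  have hmaxmem : ∀ x : ℝ, max x 0 ∈ Ici (0:ℝ) := fun x => le_max_right x 0
  have hφcont : Continuous φ := by
    have hmax : Continuous (fun x : ℝ => max x 0) := continuous_id.max continuous_const
    have h1 : Continuous (fun x : ℝ => v (max x 0)) :=
      hvc.comp_continuous hmax hmaxmem
    have h2 : Continuous (fun x : ℝ => dl (max x 0)) :=
      hdlc.comp_continuous hmax hmaxmem
    exact (h1.abs).add (h2.abs)
  have hφnn : ∀ x : ℝ, 0 ≤ φ x := by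
    intro x; rw [hφdef]; positivity
  have hφeq : ∀ x : ℝ, 0 ≤ x → φ x = |v x| + |dl x| := by
    intro x hx; rw [hφdef]; simp [max_eq_left hx]
  set ψ : ℝ → ℝ := fun x => ∫ t in (0:ℝ)..x, φ t with hψdef
  have hψd : ∀ x : ℝ, HasDerivAt ψ (φ x) x := by
    intro x
    exact (hφcont.integral_hasStrictDerivAt 0 x).hasDerivAt
  have hψc : Continuous ψ := by
    rw [continuous_iff_continuousAt]
    exact fun x => (hψd x).continuousAt
  have hψ0 : ψ 0 = 0 := by rw [hψdef]; simp
  have hψnn : ∀ x : ℝ, 0 ≤ x → 0 ≤ ψ x := by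
    intro x hx
    rw [hψdef]
    exact intervalIntegral.integral_nonneg hx (fun t _ => hφnn t)
  have hψmono : ∀ x y : ℝ, x ≤ y → ψ x ≤ ψ y := by
    intro x y hxy
    rw [hψdef]
    have h1 : IntervalIntegrable φ volume 0 x := hφcont.intervalIntegrable _ _
    have h2 : IntervalIntegrable φ volume x y := hφcont.intervalIntegrable _ _
    have := intervalIntegral.integral_add_adjacent_intervals h1 h2
    have h3 : 0 ≤ ∫ t in x..y, φ t :=
      intervalIntegral.integral_nonneg hxy (fun t _ => hφnn t)
    simp only []
    linarith
  -- main claim on [0,R]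
  have main : ∀ R : ℝ, 0 < R → ∀ r ∈ Icc (0:ℝ) R, v r = 0 ∧ dl r = 0 := by
    intro R hR
    set B : ℝ → ℝ := fun s => |s^2 - h₂ s| + |u₁ s| + |u₁ s + u₂ s| with hBdef
    have hBc : ContinuousOn B (Icc 0 R) := by
      apply ContinuousOn.add
      apply ContinuousOn.add
      · exact ((continuous_id.pow 2).continuousOn.sub
          (hh₂.cont.mono Icc_subset_Ici_self)).abs
      · exact (hu₁.cont.mono Icc_subset_Ici_self).abs
      · exact ((hu₁.cont.add hu₂.cont).mono Icc_subset_Ici_self).abs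
    obtain ⟨x₀, hx₀mem, hx₀⟩ :=
      isCompact_Icc.exists_isMaxOn ⟨0, left_mem_Icc.mpr hR.le⟩ hBc
    set C := B x₀ with hCdef
    have hC0 : 0 ≤ C := by
      refine le_trans ?_ (hx₀ (left_mem_Icc.mpr hR.le))
      rw [hBdef]; positivity
    have hPg_bound : ∀ t ∈ Icc (0:ℝ) R, |Pg t| ≤ t^(k+2) * (C * φ t) := by
      intro t ht
      have ht0 : 0 ≤ t := ht.1
      have hBt : |t^2 - h₂ t| + |u₁ t| + |u₁ t + u₂ t| ≤ C := hx₀ ht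
      rw [hPgdef, hφeq t ht0]
      simp only []
      rw [abs_mul, abs_pow, abs_of_nonneg ht0]
      apply mul_le_mul_of_nonneg_left _ (pow_nonneg ht0 _)
      have hsplit : |t^2 * v t - h₂ t * v t - dl t * u₁ t|
          ≤ |t^2 - h₂ t| * |v t| + |u₁ t| * |dl t| := by
        have he : t^2 * v t - h₂ t * v t - dl t * u₁ t
            = (t^2 - h₂ t) * v t - u₁ t * dl t := by ring
        rw [he]
        calc |(t^2 - h₂ t) * v t - u₁ t * dl t|
            ≤ |(t^2 - h₂ t) * v t| + |u₁ t * dl t| := abs_sub _ _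
          _ = |t^2 - h₂ t| * |v t| + |u₁ t| * |dl t| := by rw [abs_mul, abs_mul]
      have h1 := abs_nonneg (v t); have h2 := abs_nonneg (dl t)
      have h3 := abs_nonneg (t^2 - h₂ t); have h4 := abs_nonneg (u₁ t)
      have h5 := abs_nonneg (u₁ t + u₂ t)
      nlinarith
    have hQg_bound : ∀ t ∈ Icc (0:ℝ) R, |Qg t| ≤ t^(k+2) * (C * φ t) := by
      intro t ht
      have ht0 : 0 ≤ t := ht.1
      have hBt : |t^2 - h₂ t| + |u₁ t| + |u₁ t + u₂ t| ≤ C := hx₀ ht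
      rw [hQgdef, hφeq t ht0]
      simp only []
      rw [abs_neg, abs_mul, abs_pow, abs_of_nonneg ht0]
      apply mul_le_mul_of_nonneg_left _ (pow_nonneg ht0 _)
      rw [abs_mul]
      have h1 := abs_nonneg (v t); have h2 := abs_nonneg (dl t)
      have h3 := abs_nonneg (t^2 - h₂ t); have h4 := abs_nonneg (u₁ t)
      have h5 := abs_nonneg (u₁ t + u₂ t)
      nlinarith
    have hdv_bound : ∀ x ∈ Icc (0:ℝ) R, |dv x| ≤ C * ψ x := by
      intro x hx
      rcases eq_or_lt_of_le hx.1 with h0 | h0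
      · rw [← h0, hdvdef]
        simp [hu₁'0, hu₂'0, hψ0]
      · have hint1 : |P x| ≤ ∫ t in (0:ℝ)..x, |Pg t| := by
          rw [hPint x h0.le]
          exact intervalIntegral.abs_integral_le_integral_abs h0.le
        have hint2 : ∫ t in (0:ℝ)..x, |Pg t| ≤ ∫ t in (0:ℝ)..x, x^(k+2) * (C * φ t) := by
          apply intervalIntegral.integral_mono_on h0.le
          · exact ((hPgc.mono Icc_subset_Ici_self).abs).intervalIntegrable_of_Icc h0.le
          · exact (continuous_const.mul (continuous_const.mul hφcont)).intervalIntegrable _ _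
          · intro t ht
            calc |Pg t| ≤ t^(k+2) * (C * φ t) :=
                  hPg_bound t ⟨ht.1, le_trans ht.2 hx.2⟩
              _ ≤ x^(k+2) * (C * φ t) :=
                  mul_le_mul_of_nonneg_right (pow_le_pow_left₀ ht.1 ht.2 _)
                    (mul_nonneg hC0 (hφnn t))
        have hint3 : ∫ t in (0:ℝ)..x, x^(k+2) * (C * φ t) = x^(k+2) * (C * ψ x) := by
          rw [hψdef]
          rw [← intervalIntegral.integral_const_mul, ← intervalIntegral.integral_const_mul]
        have hPx : |P x| = x^(k+2) * |dv x| := by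
          rw [hPdef]
          simp only []
          rw [abs_mul, abs_pow, abs_of_nonneg h0.le]
        have hxp : (0:ℝ) < x^(k+2) := pow_pos h0 _
        have hcomb : x^(k+2) * |dv x| ≤ x^(k+2) * (C * ψ x) := by
          rw [← hPx]
          exact hint1.trans (hint2.trans_eq hint3)
        exact le_of_mul_le_mul_left hcomb hxp
    have hddl_bound : ∀ x ∈ Icc (0:ℝ) R, |ddl x| ≤ C * ψ x := by
      intro x hx
      rcases eq_or_lt_of_le hx.1 with h0 | h0
      · rw [← h0, hddldef]
        simp [hh₁'0, hh₂'0, hψ0]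
      · have hint1 : |Q x| ≤ ∫ t in (0:ℝ)..x, |Qg t| := by
          rw [hQint x h0.le]
          exact intervalIntegral.abs_integral_le_integral_abs h0.le
        have hint2 : ∫ t in (0:ℝ)..x, |Qg t| ≤ ∫ t in (0:ℝ)..x, x^(k+2) * (C * φ t) := by
          apply intervalIntegral.integral_mono_on h0.le
          · exact ((hQgc.mono Icc_subset_Ici_self).abs).intervalIntegrable_of_Icc h0.le
          · exact (continuous_const.mul (continuous_const.mul hφcont)).intervalIntegrable _ _
          · intro t ht
            calc |Qg t| ≤ t^(k+2) * (C * φ t) :=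
                  hQg_bound t ⟨ht.1, le_trans ht.2 hx.2⟩
              _ ≤ x^(k+2) * (C * φ t) :=
                  mul_le_mul_of_nonneg_right (pow_le_pow_left₀ ht.1 ht.2 _)
                    (mul_nonneg hC0 (hφnn t))
        have hint3 : ∫ t in (0:ℝ)..x, x^(k+2) * (C * φ t) = x^(k+2) * (C * ψ x) := by
          rw [hψdef]
          rw [← intervalIntegral.integral_const_mul, ← intervalIntegral.integral_const_mul]
        have hQx : |Q x| = x^(k+2) * |ddl x| := by
          rw [hQdef]
          simp only []
          rw [abs_mul, abs_pow, abs_of_nonneg h0.le]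
        have hxp : (0:ℝ) < x^(k+2) := pow_pos h0 _
        have hcomb : x^(k+2) * |ddl x| ≤ x^(k+2) * (C * ψ x) := by
          rw [← hQx]
          exact hint1.trans (hint2.trans_eq hint3)
        exact le_of_mul_le_mul_left hcomb hxp
    have hv_bound : ∀ x ∈ Icc (0:ℝ) R, |v x| ≤ C * R * ψ x := by
      intro x hx
      have hint1 : |v x| ≤ ∫ t in (0:ℝ)..x, |dv t| := by
        rw [hvint x hx.1]
        exact intervalIntegral.abs_integral_le_integral_abs hx.1
      have hint2 : ∫ t in (0:ℝ)..x, |dv t| ≤ ∫ t in (0:ℝ)..x, C * ψ x := by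
        apply intervalIntegral.integral_mono_on hx.1
        · exact ((hdvc.mono Icc_subset_Ici_self).abs).intervalIntegrable_of_Icc hx.1
        · exact intervalIntegrable_const
        · intro t ht
          calc |dv t| ≤ C * ψ t := hdv_bound t ⟨ht.1, le_trans ht.2 hx.2⟩
            _ ≤ C * ψ x := mul_le_mul_of_nonneg_left (hψmono t x ht.2) hC0
      rw [intervalIntegral.integral_const, smul_eq_mul, sub_zero] at hint2
      have hψx := hψnn x hx.1
      calc |v x| ≤ x * (C * ψ x) := hint1.trans hint2
        _ ≤ C * R * ψ x := by
            nlinarith [mul_nonneg (mul_nonneg hC0 hψx) (sub_nonneg.mpr hx.2)]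
    have hdl_bound : ∀ x ∈ Icc (0:ℝ) R, |dl x| ≤ C * R * ψ x := by
      intro x hx
      have hint1 : |dl x| ≤ ∫ t in (0:ℝ)..x, |ddl t| := by
        rw [hdlint x hx.1]
        exact intervalIntegral.abs_integral_le_integral_abs hx.1
      have hint2 : ∫ t in (0:ℝ)..x, |ddl t| ≤ ∫ t in (0:ℝ)..x, C * ψ x := by
        apply intervalIntegral.integral_mono_on hx.1
        · exact ((hddlc.mono Icc_subset_Ici_self).abs).intervalIntegrable_of_Icc hx.1
        · exact intervalIntegrable_const
        · intro t ht
          calc |ddl t| ≤ C * ψ t := hddl_bound t ⟨ht.1, le_trans ht.2 hx.2⟩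
            _ ≤ C * ψ x := mul_le_mul_of_nonneg_left (hψmono t x ht.2) hC0
      rw [intervalIntegral.integral_const, smul_eq_mul, sub_zero] at hint2
      have hψx := hψnn x hx.1
      calc |dl x| ≤ x * (C * ψ x) := hint1.trans hint2
        _ ≤ C * R * ψ x := by
            nlinarith [mul_nonneg (mul_nonneg hC0 hψx) (sub_nonneg.mpr hx.2)]
    -- Gronwall
    set K := 2 * (C * R) with hKdef
    have hK0 : 0 ≤ K := by
      rw [hKdef]; have := hR.le; positivity
    have hgron := norm_le_gronwallBound_of_norm_deriv_right_le
      (f := ψ) (f' := φ) (δ := 0) (K := K) (ε := 0) (a := 0) (b := R)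
      hψc.continuousOn (fun x _ => (hψd x).hasDerivWithinAt)
      (by rw [hψ0]; simp)
      (by
        intro x hx
        rw [Real.norm_eq_abs, Real.norm_eq_abs, abs_of_nonneg (hφnn x),
          abs_of_nonneg (hψnn x hx.1), add_zero, hφeq x hx.1, hKdef]
        have h1 := hv_bound x ⟨hx.1, hx.2.le⟩
        have h2 := hdl_bound x ⟨hx.1, hx.2.le⟩
        linarith)
    intro r hr
    have hψr : ψ r = 0 := by
      have h := hgron r hr
      rw [gronwallBound_ε0_δ0, Real.norm_eq_abs, abs_of_nonneg (hψnn r hr.1)] at h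
      have := hψnn r hr.1
      linarith
    have h1 := hv_bound r hr
    have h2 := hdl_bound r hr
    rw [hψr, mul_zero] at h1 h2
    constructor
    · exact abs_eq_zero.mp (le_antisymm h1 (abs_nonneg _))
    · exact abs_eq_zero.mp (le_antisymm h2 (abs_nonneg _))
  -- conclude
  intro r hr
  rcases eq_or_lt_of_le hr with h0 | h0
  · exact ⟨by rw [← h0]; exact hb, by rw [← h0]; exact hc⟩
  · have h := main r h0 r (right_mem_Icc.mpr h0.le)
    have h1 : u₂ r - u₁ r = 0 := h.1
    have h2 : h₂ r - h₁ r = 0 := h.2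
    exact ⟨by linarith, by linarith⟩

/-- Uniqueness of the positive decaying (ground state) solution of the SNH shooting
system for a fixed central value `b > 0`. -/
theorem stmt14 (d : ℕ) (hd : 3 ≤ d) (b : ℝ) (hb : 0 < b)
    (u₁ u₂ h₁ h₂ : ℝ → ℝ) (c₁ c₂ : ℝ)
    (hu₁ : C2Ici u₁) (hh₁ : C2Ici h₁) (hu₂ : C2Ici u₂) (hh₂ : C2Ici h₂)
    (hequ₁ : ∀ r : ℝ, 0 < r →
      dI (dI u₁) r + ((d:ℝ) - 1) / r * dI u₁ r - r^2 * u₁ r + h₁ r * u₁ r = 0)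
    (heqh₁ : ∀ r : ℝ, 0 < r →
      dI (dI h₁) r + ((d:ℝ) - 1) / r * dI h₁ r + (u₁ r)^2 = 0)
    (hequ₂ : ∀ r : ℝ, 0 < r →
      dI (dI u₂) r + ((d:ℝ) - 1) / r * dI u₂ r - r^2 * u₂ r + h₂ r * u₂ r = 0)
    (heqh₂ : ∀ r : ℝ, 0 < r →
      dI (dI h₂) r + ((d:ℝ) - 1) / r * dI h₂ r + (u₂ r)^2 = 0)
    (hu₁0 : u₁ 0 = b) (hu₂0 : u₂ 0 = b)
    (hh₁0 : h₁ 0 = c₁) (hh₂0 : h₂ 0 = c₂)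
    (hu₁'0 : dI u₁ 0 = 0) (hu₂'0 : dI u₂ 0 = 0)
    (hh₁'0 : dI h₁ 0 = 0) (hh₂'0 : dI h₂ 0 = 0)
    (hpos₁ : ∀ r : ℝ, 0 ≤ r → 0 < u₁ r) (hpos₂ : ∀ r : ℝ, 0 ≤ r → 0 < u₂ r)
    (hlim₁ : Tendsto u₁ atTop (nhds 0)) (hlim₂ : Tendsto u₂ atTop (nhds 0))
    (hint₁ : IntegrableOn (fun r : ℝ => (u₁ r)^2 * r^(d-1)) (Ioi 0))
    (hint₂ : IntegrableOn (fun r : ℝ => (u₂ r)^2 * r^(d-1)) (Ioi 0)) :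
    c₁ = c₂ ∧ EqOn u₁ u₂ (Ici 0) ∧ EqOn h₁ h₂ (Ici 0) := by
  obtain ⟨k, rfl⟩ : ∃ k, d = k + 3 := ⟨d - 3, by omega⟩
  have hcast : ((k + 3 : ℕ) : ℝ) = (k:ℝ) + 3 := by push_cast; ring
  rw [hcast] at hequ₁ hequ₂ heqh₁ heqh₂
  have hpow : k + 3 - 1 = k + 2 := rfl
  rw [hpow] at hint₁ hint₂
  have hbeq : u₁ 0 = u₂ 0 := by rw [hu₁0, hu₂0]
  have hcc : c₁ = c₂ := by
    rcases lt_trichotomy c₁ c₂ with h | h | h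
    · exact (keyA k u₁ u₂ h₁ h₂ hu₁ hh₁ hu₂ hh₂ hequ₁ hequ₂ heqh₁ heqh₂
        hbeq hpos₁ hpos₂ hint₁ (by rw [hh₁0, hh₂0]; exact h)).elim
    · exact h
    · exact (keyA k u₂ u₁ h₂ h₁ hu₂ hh₂ hu₁ hh₁ hequ₂ hequ₁ heqh₂ heqh₁
        hbeq.symm hpos₂ hpos₁ hint₂ (by rw [hh₁0, hh₂0]; exact h)).elim
  have hB := keyB k u₁ u₂ h₁ h₂ hu₁ hh₁ hu₂ hh₂ hequ₁ hequ₂ heqh₁ heqh₂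
    hbeq (by rw [hh₁0, hh₂0, hcc]) hu₁'0 hu₂'0 hh₁'0 hh₂'0
  exact ⟨hcc, fun r hr => (hB r hr).1, fun r hr => (hB r hr).2⟩
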